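/- arXiv:0902.1663 — 2 statements merged into one kernel-verified Lean document; each statement's English description precedes it below -/
import Mathlib

section
/- The coefficient of x1^{s1} ... xk^{sk} in h_{r1}(x1,...,xk)...h_{rℓ}(x1,...,xk) equals the coefficient of x1^{r1} ... xℓ^{rℓ} in h_{s1}(x1,...,xℓ)...h_{sk}(x1,...,xℓ), whenever s1+...+sk = r1+...+rℓ. -/
/-!
Expanding `∏ j, h_{r j}(x_1, …, x_k)` by choosing one monomial `x^{M j}` from the `j`-th factor,
the coefficient of `x^s` counts the `ℕ`-matrices `M` whose rows sum to `r` and whose columns sum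
to `s`. Transposition identifies these with the matrices with row sums `s` and column sums `r`.
-/

open MvPolynomial Finset

/-- The complete homogeneous symmetric polynomial of degree `m` in `k` variables. -/
noncomputable def hpoly (k m : ℕ) : MvPolynomial (Fin k) ℕ :=
  ∑ d ∈ Finset.Nat.antidiagonalTuple k m, ∏ i, MvPolynomial.X i ^ d i

section ContingencyTables

variable {ι κ : Type*} [Fintype ι] [DecidableEq ι] [Fintype κ] [DecidableEq κ]

def contingencyTables (r : ι → ℕ) (c : κ → ℕ) : Finset (ι → κ → ℕ) :=
  {M ∈ Fintype.piFinset fun i => piAntidiag univ (r i) | ∀ j, ∑ i, M i j = c j}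

theorem mem_contingencyTables {r : ι → ℕ} {c : κ → ℕ} {M : ι → κ → ℕ} :
    M ∈ contingencyTables r c ↔ (∀ i, ∑ j, M i j = r i) ∧ ∀ j, ∑ i, M i j = c j := by
  simp [contingencyTables]

theorem card_contingencyTables_comm (r : ι → ℕ) (c : κ → ℕ) :
    #(contingencyTables r c) = #(contingencyTables c r) :=
  card_nbij' Function.swap Function.swap
    (fun _ hM ↦ by simpa [mem_contingencyTables, and_comm] using hM)
    (fun _ hM ↦ by simpa [mem_contingencyTables, and_comm] using hM)
    (fun _ _ ↦ rfl) (fun _ _ ↦ rfl)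

end ContingencyTables

theorem coeff_equivFunOnFinite_prod_X_pow {σ R : Type*} [Fintype σ] [CommSemiring R] (c d : σ → ℕ) :
    coeff (Finsupp.equivFunOnFinite.symm c) (∏ i, (X i : MvPolynomial σ R) ^ d i) =
      if d = c then 1 else 0 := by
  have prod_X_pow_eq_monomial :
      ∏ i, (X i : MvPolynomial σ R) ^ d i = monomial (Finsupp.equivFunOnFinite.symm d) 1 := by
    rw [monomial_eq, Finsupp.prod_fintype _ _ fun _ ↦ pow_zero _]
    simp
  classical
  rw [prod_X_pow_eq_monomial, coeff_monomial]
  exact if_congr Finsupp.equivFunOnFinite.symm.apply_eq_iff_eq rfl rfl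

theorem hpoly_eq_sum_piAntidiag (k m : ℕ) :
    hpoly k m = ∑ d ∈ piAntidiag univ m, ∏ i, X i ^ d i := by
  unfold hpoly
  congr 1
  ext d
  simp [Finset.Nat.mem_antidiagonalTuple]

theorem coeff_prod_hpoly_eq_card_contingencyTables {ι : Type*} [Fintype ι] [DecidableEq ι]
    (k : ℕ) (r : ι → ℕ) (c : Fin k → ℕ) :
    coeff (Finsupp.equivFunOnFinite.symm c) (∏ i, hpoly k (r i)) =
      #(contingencyTables r c) := by
  have prod_row_monomials (M : ι → Fin k → ℕ) :
      ∏ i, ∏ j, (X j : MvPolynomial (Fin k) ℕ) ^ M i j = ∏ j, X j ^ ∑ i, M i j := by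
    rw [prod_comm]
    exact prod_congr rfl fun j _ ↦ prod_pow_eq_pow_sum _ _ _
  simp only [hpoly_eq_sum_piAntidiag, prod_univ_sum, coeff_sum, prod_row_monomials,
    coeff_equivFunOnFinite_prod_X_pow, contingencyTables, card_filter, funext_iff]
  convert rfl

theorem stmt6_general (k l : ℕ) (s : Fin k → ℕ) (r : Fin l → ℕ) :
    MvPolynomial.coeff (Finsupp.equivFunOnFinite.symm s) (∏ j, hpoly k (r j)) =
      MvPolynomial.coeff (Finsupp.equivFunOnFinite.symm r) (∏ i, hpoly l (s i)) := by
  rw [coeff_prod_hpoly_eq_card_contingencyTables, coeff_prod_hpoly_eq_card_contingencyTables,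
    card_contingencyTables_comm]

theorem stmt6 (k l : ℕ) (s : Fin k → ℕ) (r : Fin l → ℕ)
    (h : ∑ i, s i = ∑ j, r j) :
    MvPolynomial.coeff (Finsupp.equivFunOnFinite.symm s) (∏ j, hpoly k (r j)) =
      MvPolynomial.coeff (Finsupp.equivFunOnFinite.symm r) (∏ i, hpoly l (s i)) :=
  stmt6_general k l s r
end

section
/- For sender counts (6, 1, 1, 1, 1, 1, 1) and receiver counts (6, 1, 1, 1, 1, 1, 1) (with messages within a user's set distinguishable), the number of ways to match the 12 labeled sent messages to the 12 labeled received messages modulo permutations within each user's messages (equivalently, the count computed by the symmetric function coefficient) equals 13327, and this value is the same for sender/receiver counts (s, 1^6; s, 1^6) for every s ≥ 6. -/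
open MvPolynomial Finset

lemma prod_X_pow_eq_monomial' {k : ℕ} (d : Fin k → ℕ) :
    (∏ i, (MvPolynomial.X i : MvPolynomial (Fin k) ℕ) ^ d i)
      = MvPolynomial.monomial (Finsupp.equivFunOnFinite.symm d) 1 := by
  rw [← MvPolynomial.prod_X_pow_eq_monomial]
  refine (Finset.prod_subset (Finset.subset_univ _) ?_).symm
  intro x _ hx
  have h0 : (Finsupp.equivFunOnFinite.symm d) x = 0 := by
    simpa using (Finsupp.notMem_support_iff.mp hx)
  simp only [Finsupp.coe_equivFunOnFinite_symm] at h0 ⊢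
  simp [h0]

lemma coeff_hpoly (k m : ℕ) (e : Fin k →₀ ℕ) :
    MvPolynomial.coeff e (hpoly k m) = if (∑ i, e i) = m then 1 else 0 := by
  unfold hpoly
  simp_rw [prod_X_pow_eq_monomial']
  rw [MvPolynomial.coeff_sum]
  simp_rw [MvPolynomial.coeff_monomial]
  have : ∀ d : Fin k → ℕ, (Finsupp.equivFunOnFinite.symm d = e) ↔ d = ⇑e := by
    intro d
    rw [Equiv.symm_apply_eq]
    rfl
  simp_rw [this]
  rw [Finset.sum_ite_eq' (Finset.Nat.antidiagonalTuple k m) (⇑e) (fun _ => (1 : ℕ))]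
  simp [Finset.Nat.mem_antidiagonalTuple]

lemma hpoly_one (k : ℕ) : hpoly k 1 = ∑ i, MvPolynomial.X i := by
  unfold hpoly
  have himg : Finset.Nat.antidiagonalTuple k 1
      = Finset.univ.image (fun i : Fin k => (Pi.single i 1 : Fin k → ℕ)) := by
    ext d
    simp only [Finset.Nat.mem_antidiagonalTuple, Finset.mem_image, Finset.mem_univ, true_and]
    constructor
    · intro hd
      have hpos : ∃ i, d i ≠ 0 := by
        by_contra h
        push_neg at h
        simp [h] at hd
      obtain ⟨i, hi⟩ := hpos
      refine ⟨i, ?_⟩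
      have h1 : d i ≤ 1 := hd ▸ Finset.single_le_sum (fun j _ => Nat.zero_le (d j)) (Finset.mem_univ i)
      have hdi : d i = 1 := le_antisymm h1 (Nat.one_le_iff_ne_zero.mpr hi)
      have hrest : ∀ j, j ≠ i → d j = 0 := by
        intro j hj
        have := Finset.add_sum_erase Finset.univ d (Finset.mem_univ i)
        rw [hd, hdi] at this
        have hsum0 : ∑ x ∈ Finset.univ.erase i, d x = 0 := by omega
        exact Finset.sum_eq_zero_iff.mp hsum0 j (Finset.mem_erase.mpr ⟨hj, Finset.mem_univ j⟩)
      funext j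
      by_cases hji : j = i
      · subst hji; simp [hdi]
      · simp [Pi.single_apply, hji, hrest j hji]
    · rintro ⟨i, rfl⟩
      simp [Pi.single_apply]
  rw [himg, Finset.sum_image]
  · refine Finset.sum_congr rfl fun i _ => ?_
    rw [Finset.prod_eq_single i]
    · simp
    · intro j _ hj; simp [Pi.single_apply, hj]
    · simp
  · intro i _ j _ hij
    by_contra h
    have h2 := congr_fun hij i
    simp [Pi.single_apply, h] at h2

set_option maxRecDepth 10000 in
lemma key_sum : (∑ k ∈ Finset.Nat.antidiagonalTuple 7 6,
    (if ∀ i : Fin 7, i ≠ 0 → k i ≤ 1 then Nat.multinomial Finset.univ k else 0)) = 13327 := by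
  decide

theorem stmt16 (s : ℕ) (hs : 6 ≤ s) :
    MvPolynomial.coeff
      (Finsupp.equivFunOnFinite.symm (fun i : Fin 7 => if i = 0 then s else 1))
      (hpoly 7 s * (hpoly 7 1) ^ 6) = 13327 := by
  set t : Fin 7 →₀ ℕ := Finsupp.equivFunOnFinite.symm (fun i : Fin 7 => if i = 0 then s else 1)
    with ht
  have htapp : ∀ i, t i = if i = 0 then s else 1 := fun i => rfl
  have hts : ∑ i, t i = s + 6 := by
    simp [htapp, Fin.sum_univ_seven]
  -- expand the power using the multinomial theorem
  rw [hpoly_one]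
  rw [Finset.sum_pow_eq_sum_piAntidiag, Finset.piAntidiag_univ_fin_eq_antidiagonalTuple 6 7]
  simp_rw [prod_X_pow_eq_monomial', ← MvPolynomial.C_eq_coe_nat, MvPolynomial.C_mul_monomial,
    mul_one]
  rw [Finset.mul_sum, MvPolynomial.coeff_sum]
  simp_rw [MvPolynomial.coeff_mul_monomial']
  rw [← key_sum]
  apply Finset.sum_congr rfl
  intro k hk
  have hk6 : ∑ i, k i = 6 := Finset.Nat.mem_antidiagonalTuple.mp hk
  by_cases hcond : ∀ i : Fin 7, i ≠ 0 → k i ≤ 1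
  · have hle : Finsupp.equivFunOnFinite.symm k ≤ t := by
      rw [Finsupp.le_def]
      intro i
      by_cases hi : i = 0
      · subst hi
        have hk0 : k 0 ≤ 6 :=
          (Finset.single_le_sum (fun j _ => Nat.zero_le (k j)) (Finset.mem_univ 0)).trans hk6.le
        simpa [htapp] using hk0.trans hs
      · simpa [htapp, hi] using hcond i hi
    rw [if_pos hle, if_pos hcond, coeff_hpoly]
    have hsub : ∑ i, (t - Finsupp.equivFunOnFinite.symm k) i = s := by
      have happ : ∀ i, (t - Finsupp.equivFunOnFinite.symm k) i = t i - k i := fun i => rfl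
      simp_rw [happ]
      rw [Finset.sum_tsub_distrib]
      · rw [hts, hk6]
        omega
      · intro i _
        exact Finsupp.le_def.mp hle i
    rw [if_pos hsub, one_mul, Nat.cast_id]
  · rw [if_neg, if_neg hcond]
    intro hle
    push_neg at hcond
    obtain ⟨i, hi0, hi2⟩ := hcond
    have hi := Finsupp.le_def.mp hle i
    have : (Finsupp.equivFunOnFinite.symm k) i = k i := rfl
    rw [this, htapp, if_neg hi0] at hi
    omega
end
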